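/- (Extension rule for circuit reducibility.) If (C, {p_i}_{i∈C}) is δ-reducible to (C', {q_j}_{j∈C'}), then for any additional disjoint set of locations C₀ with error parameters {r_k}_{k∈C₀}, the pair (C ∪ C₀, {p_i} ∪ {r_k}) is δ-reducible to (C' ∪ C₀, {q_j} ∪ {r_k}). Here joint random variables (F, F₀) ⊆ C × C₀ satisfying ℙ[F ⊇ A and F₀ ⊇ A₀] ≤ (∏_{i∈A} p_i)(∏_{k∈A₀} r_k) are mapped via Γ'(F ∪ F₀) = Γ(F) ∪ F₀ and m'(F ∪ F₀) = m(F), and the conclusion is ℙ[m(F)=0] ≥ 1−δ together with ℙ[m(F)=0 and Γ(F) ⊇ A' and F₀ ⊇ A₀] ≤ (∏_{j∈A'} q_j)(∏_{k∈A₀} r_k) for all A' ⊆ C', A₀ ⊆ C₀. -/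

import Mathlib

open scoped Classical

/-- Probability that a random subset (given by a probability mass function `μ` on `Finset ι`)
satisfies the event `E`. -/
noncomputable def prob {ι : Type*} [Fintype ι] (μ : Finset ι → ℝ) (E : Finset ι → Prop) : ℝ :=
  ∑ F : Finset ι, if E F then μ F else 0

/-- `μ` is a probability mass function on subsets of the finite set of locations `ι`. -/
def IsPMF {ι : Type*} [Fintype ι] (μ : Finset ι → ℝ) : Prop :=
  (∀ F, 0 ≤ μ F) ∧ ∑ F : Finset ι, μ F = 1

/-- The random fault set distributed according to `μ` is local stochastic with error
parameters `p`: for every `A`, `ℙ[F ⊇ A] ≤ ∏_{i∈A} p_i` (the empty product is `1`). -/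
def LocalStochastic {ι : Type*} [Fintype ι] (p : ι → ℝ) (μ : Finset ι → ℝ) : Prop :=
  ∀ A : Finset ι, prob μ (fun F => A ⊆ F) ≤ ∏ i ∈ A, p i

/-- `(Γ, m)` witnesses δ-reducibility of `(C, p)` to `(C', q)`: for every local stochastic
random fault set `F` with parameters `p`, (a) `ℙ[m(F) = 0] ≥ 1 − δ` and
(b) `ℙ[m(F) = 0 and Γ(F) ⊇ A'] ≤ ∏_{j∈A'} q_j` for every `A'`. -/
def Witnesses {ι ι' : Type*} [Fintype ι] [Fintype ι'] (p : ι → ℝ) (q : ι' → ℝ) (δ : ℝ)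
    (Γ : Finset ι → Finset ι') (m : Finset ι → Bool) : Prop :=
  ∀ μ : Finset ι → ℝ, IsPMF μ → LocalStochastic p μ →
    (1 - δ ≤ prob μ (fun F => m F = false)) ∧
    (∀ A' : Finset ι',
      prob μ (fun F => m F = false ∧ A' ⊆ Γ F) ≤ ∏ j ∈ A', q j)

/-- `(C, p)` is δ-reducible to `(C', q)` (the probabilistic conditions of the definition
of circuit reducibility; the semantic condition on Pauli error assignments is abstracted
away). -/
def Reducible {ι ι' : Type*} [Fintype ι] [Fintype ι'] (p : ι → ℝ) (q : ι' → ℝ)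
    (δ : ℝ) : Prop :=
  ∃ (Γ : Finset ι → Finset ι') (m : Finset ι → Bool), Witnesses p q δ Γ m

section Helpers

variable {κ κ₀ : Type*} [Fintype κ] [Fintype κ₀]

/-- The equivalence between subsets of a sum type and pairs of subsets. -/
def finsetSumEquiv : Finset (κ ⊕ κ₀) ≃ Finset κ × Finset κ₀ where
  toFun F := (F.toLeft, F.toRight)
  invFun p := p.1.disjSum p.2
  left_inv F := Finset.toLeft_disjSum_toRight
  right_inv p := by simp

lemma sum_disjSum_eq (f : Finset (κ ⊕ κ₀) → ℝ) :
    ∑ F : Finset (κ ⊕ κ₀), f F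
      = ∑ G : Finset κ, ∑ H : Finset κ₀, f (G.disjSum H) := by
  rw [← Equiv.sum_comp (finsetSumEquiv (κ := κ) (κ₀ := κ₀)).symm f, Fintype.sum_prod_type]
  rfl

lemma prob_disjSum (μ : Finset (κ ⊕ κ₀) → ℝ) (E : Finset (κ ⊕ κ₀) → Prop) :
    prob μ E = ∑ G : Finset κ, ∑ H : Finset κ₀,
      if E (G.disjSum H) then μ (G.disjSum H) else 0 :=
  sum_disjSum_eq _

lemma disjSum_subset_iff {s : Finset κ} {t : Finset κ₀} {u : Finset (κ ⊕ κ₀)} :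
    s.disjSum t ⊆ u ↔ s ⊆ u.toLeft ∧ t ⊆ u.toRight := by
  constructor
  · intro h
    exact ⟨fun x hx => Finset.mem_toLeft.2 (h (Finset.inl_mem_disjSum.2 hx)),
      fun x hx => Finset.mem_toRight.2 (h (Finset.inr_mem_disjSum.2 hx))⟩
  · rintro ⟨h1, h2⟩ x hx
    rcases Finset.mem_disjSum.1 hx with ⟨a, ha, rfl⟩ | ⟨b, hb, rfl⟩
    · exact Finset.mem_toLeft.1 (h1 ha)
    · exact Finset.mem_toRight.1 (h2 hb)

lemma prob_mono {ι : Type*} [Fintype ι] {μ : Finset ι → ℝ} (h0 : ∀ F, 0 ≤ μ F)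
    {E E' : Finset ι → Prop} (h : ∀ F, E F → E' F) : prob μ E ≤ prob μ E' := by
  apply Finset.sum_le_sum
  intro F _
  by_cases hE : E F
  · simp [hE, h F hE]
  · simp only [hE, if_false]
    split_ifs with h'
    exacts [h0 F, le_rfl]

lemma prob_nonneg {ι : Type*} [Fintype ι] {μ : Finset ι → ℝ} (h0 : ∀ F, 0 ≤ μ F)
    (E : Finset ι → Prop) : 0 ≤ prob μ E := by
  apply Finset.sum_nonneg
  intro F _
  split_ifs
  exacts [h0 F, le_rfl]

end Helpers

/-- Extension rule for circuit reducibility: if `(C, p)` is δ-reducible to `(C', q)`, then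
for any additional disjoint set of locations `C₀` (modeled by the sum type) with error
parameters `r`, the pair `(C ∪ C₀, p ∪ r)` is δ-reducible to `(C' ∪ C₀, q ∪ r)`. -/
theorem reducible_extension {ι ι' ι₀ : Type*} [Fintype ι] [Fintype ι'] [Fintype ι₀]
    (p : ι → ℝ) (q : ι' → ℝ) (r : ι₀ → ℝ)
    (hp : ∀ i, 0 ≤ p i ∧ p i ≤ 1) (hq : ∀ j, 0 ≤ q j ∧ q j ≤ 1)
    (hr : ∀ k, 0 ≤ r k ∧ r k ≤ 1)
    (δ : ℝ) (hδ0 : 0 ≤ δ) (hδ1 : δ ≤ 1)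
    (h : Reducible p q δ) :
    Reducible (Sum.elim p r) (Sum.elim q r) δ := by
  obtain ⟨Γ, m, hw⟩ := h
  refine ⟨fun F => (Γ F.toLeft).disjSum F.toRight, fun F => m F.toLeft, ?_⟩
  intro μ hμ hls
  obtain ⟨hμ0, hμ1⟩ := hμ
  -- the marginal distribution on `Finset ι`
  set μ₁ : Finset ι → ℝ := fun G => ∑ H : Finset ι₀, μ (G.disjSum H) with hμ₁def
  have hμ₁0 : ∀ G, 0 ≤ μ₁ G := fun G => Finset.sum_nonneg fun H _ => hμ0 _
  have hμ₁sum : ∑ G : Finset ι, μ₁ G = 1 := by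
    simp only [hμ₁def]
    rw [← sum_disjSum_eq μ]
    exact hμ1
  have hprob₁ : ∀ E : Finset ι → Prop, prob μ₁ E = prob μ (fun F => E F.toLeft) := by
    intro E
    rw [prob_disjSum μ (fun F => E F.toLeft)]
    simp only [Finset.toLeft_disjSum]
    unfold prob
    apply Finset.sum_congr rfl
    intro G _
    by_cases hE : E G <;> simp [hE, hμ₁def]
  have hμ₁ls : LocalStochastic p μ₁ := by
    intro A
    rw [hprob₁]
    have h1 : (fun F : Finset (ι ⊕ ι₀) => A ⊆ F.toLeft)
        = fun F => A.disjSum (∅ : Finset ι₀) ⊆ F :=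
      funext fun F => propext (by rw [disjSum_subset_iff]; simp)
    rw [h1]
    calc prob μ (fun F => A.disjSum (∅ : Finset ι₀) ⊆ F)
        ≤ ∏ x ∈ A.disjSum (∅ : Finset ι₀), Sum.elim p r x := hls _
      _ = ∏ i ∈ A, p i := by rw [Finset.prod_disjSum]; simp
  obtain ⟨ha, -⟩ := hw μ₁ ⟨hμ₁0, hμ₁sum⟩ hμ₁ls
  constructor
  · rw [← hprob₁ (fun G => m G = false)]
    exact ha
  · intro A'
    set A₁ := A'.toLeft with hA₁
    set A₀ := A'.toRight with hA₀def
    have hA' : A' = A₁.disjSum A₀ := Finset.toLeft_disjSum_toRight.symm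
    have hRHS : ∏ j ∈ A', Sum.elim q r j = (∏ j ∈ A₁, q j) * ∏ k ∈ A₀, r k := by
      simp only [hA', Finset.prod_disjSum, Sum.elim_inl, Sum.elim_inr]
    set R := ∏ k ∈ A₀, r k with hR
    have hR0 : 0 ≤ R := Finset.prod_nonneg fun k _ => (hr k).1
    have hev : ∀ F : Finset (ι ⊕ ι₀),
        (m F.toLeft = false ∧ A' ⊆ (Γ F.toLeft).disjSum F.toRight)
        ↔ (m F.toLeft = false ∧ A₁ ⊆ Γ F.toLeft ∧ A₀ ⊆ F.toRight) := by
      intro F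
      rw [hA', disjSum_subset_iff]
      simp
    have hLHS : prob μ (fun F => m F.toLeft = false ∧ A' ⊆ (Γ F.toLeft).disjSum F.toRight)
        = ∑ G : Finset ι, if (m G = false ∧ A₁ ⊆ Γ G)
            then (∑ H : Finset ι₀, if A₀ ⊆ H then μ (G.disjSum H) else 0) else 0 := by
      have h1 : (fun F : Finset (ι ⊕ ι₀) =>
            m F.toLeft = false ∧ A' ⊆ (Γ F.toLeft).disjSum F.toRight)
          = fun F => m F.toLeft = false ∧ A₁ ⊆ Γ F.toLeft ∧ A₀ ⊆ F.toRight :=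
        funext fun F => propext (hev F)
      rw [h1, prob_disjSum]
      apply Finset.sum_congr rfl
      intro G _
      simp only [Finset.toLeft_disjSum, Finset.toRight_disjSum]
      by_cases hc : m G = false ∧ A₁ ⊆ Γ G
      · obtain ⟨hc1, hc2⟩ := hc
        simp [hc1, hc2]
      · rw [if_neg hc]
        refine (Finset.sum_eq_zero fun H _ => if_neg ?_).symm.symm
        tauto
    have hA₀ : prob μ (fun F => A₀ ⊆ F.toRight) ≤ R := by
      have h1 : (fun F : Finset (ι ⊕ ι₀) => A₀ ⊆ F.toRight)
          = fun F => (∅ : Finset ι).disjSum A₀ ⊆ F :=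
        funext fun F => propext (by rw [disjSum_subset_iff]; simp)
      rw [h1]
      calc prob μ (fun F => (∅ : Finset ι).disjSum A₀ ⊆ F)
          ≤ ∏ x ∈ (∅ : Finset ι).disjSum A₀, Sum.elim p r x := hls _
        _ = R := by rw [Finset.prod_disjSum]; simp [hR]
    rcases eq_or_lt_of_le hR0 with hR0' | hRpos
    · -- degenerate case `R = 0`
      rw [hRHS, ← hR0', mul_zero]
      calc prob μ (fun F => m F.toLeft = false ∧ A' ⊆ (Γ F.toLeft).disjSum F.toRight)
          ≤ prob μ (fun F => A₀ ⊆ F.toRight) :=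
            prob_mono hμ0 (fun F hF => ((hev F).1 hF).2.2)
        _ ≤ R := hA₀
        _ = 0 := hR0'.symm
    · -- main case `R > 0`: condition on `A₀ ⊆ F₀` and rescale
      set ν : Finset ι → ℝ :=
        fun G => (∑ H : Finset ι₀, if A₀ ⊆ H then μ (G.disjSum H) else 0) / R with hν
      have hν0 : ∀ G, 0 ≤ ν G := by
        intro G
        apply div_nonneg _ hR0
        refine Finset.sum_nonneg fun H _ => ?_
        split_ifs
        exacts [hμ0 _, le_rfl]
      have hνsum : ∑ G : Finset ι, ν G ≤ 1 := by
        have e1 : ∑ G : Finset ι, ν G = (prob μ (fun F => A₀ ⊆ F.toRight)) / R := by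
          simp only [hν]
          rw [← Finset.sum_div]
          congr 1
          rw [prob_disjSum]
          simp only [Finset.toRight_disjSum]
        rw [e1, div_le_one hRpos]
        exact hA₀
      set μ₂ : Finset ι → ℝ :=
        fun G => ν G + if G = ∅ then 1 - ∑ G' : Finset ι, ν G' else 0 with hμ₂
      have hμ₂0 : ∀ G, 0 ≤ μ₂ G := by
        intro G
        apply add_nonneg (hν0 G)
        split_ifs
        · linarith
        · exact le_rfl
      have hμ₂sum : ∑ G : Finset ι, μ₂ G = 1 := by
        simp only [hμ₂]
        rw [Finset.sum_add_distrib, Finset.sum_ite_eq' Finset.univ (∅ : Finset ι)]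
        simp
      have hμ₂ls : LocalStochastic p μ₂ := by
        intro A
        by_cases hA : A = ∅
        · subst hA
          have h1 : prob μ₂ (fun F => (∅ : Finset ι) ⊆ F) = ∑ G : Finset ι, μ₂ G :=
            Finset.sum_congr rfl fun G _ => if_pos (Finset.empty_subset G)
          rw [h1, hμ₂sum]
          simp
        · have e2 : prob μ₂ (fun G => A ⊆ G) = ∑ G : Finset ι, if A ⊆ G then ν G else 0 := by
            unfold prob
            apply Finset.sum_congr rfl
            intro G _
            by_cases hAG : A ⊆ G
            · have hG : G ≠ ∅ := fun hG => hA (Finset.subset_empty.1 (hG ▸ hAG))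
              rw [if_pos hAG, if_pos hAG]
              simp [hμ₂, hG]
            · rw [if_neg hAG, if_neg hAG]
          rw [e2]
          have e3 : (∑ G : Finset ι, if A ⊆ G then ν G else 0)
              = (prob μ (fun F => A.disjSum A₀ ⊆ F)) / R := by
            rw [prob_disjSum, Finset.sum_div]
            apply Finset.sum_congr rfl
            intro G _
            by_cases hAG : A ⊆ G <;>
              simp [hν, disjSum_subset_iff, hAG]
          rw [e3, div_le_iff₀ hRpos]
          calc prob μ (fun F => A.disjSum A₀ ⊆ F)
              ≤ ∏ x ∈ A.disjSum A₀, Sum.elim p r x := hls _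
            _ = (∏ i ∈ A, p i) * R := by simp only [Finset.prod_disjSum, Sum.elim_inl, Sum.elim_inr, hR]
      obtain ⟨-, hb2⟩ := hw μ₂ ⟨hμ₂0, hμ₂sum⟩ hμ₂ls
      have hge : (∑ G : Finset ι, if (m G = false ∧ A₁ ⊆ Γ G) then ν G else 0)
          ≤ prob μ₂ (fun G => m G = false ∧ A₁ ⊆ Γ G) := by
        unfold prob
        apply Finset.sum_le_sum
        intro G _
        by_cases hc : m G = false ∧ A₁ ⊆ Γ G
        · rw [if_pos hc, if_pos hc]
          simp only [hμ₂]
          have : (0 : ℝ) ≤ if G = ∅ then 1 - ∑ G' : Finset ι, ν G' else 0 := by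
            split_ifs
            · linarith
            · exact le_rfl
          linarith
        · rw [if_neg hc, if_neg hc]
      rw [hLHS, hRHS]
      have e4 : (∑ G : Finset ι, if (m G = false ∧ A₁ ⊆ Γ G)
              then (∑ H : Finset ι₀, if A₀ ⊆ H then μ (G.disjSum H) else 0) else 0)
          = (∑ G : Finset ι, if (m G = false ∧ A₁ ⊆ Γ G) then ν G else 0) * R := by
        rw [Finset.sum_mul]
        apply Finset.sum_congr rfl
        intro G _
        by_cases hc : m G = false ∧ A₁ ⊆ Γ G
        · rw [if_pos hc, if_pos hc]
          simp only [hν]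
          rw [div_mul_cancel₀ _ (ne_of_gt hRpos)]
        · rw [if_neg hc, if_neg hc, zero_mul]
      rw [e4]
      exact mul_le_mul_of_nonneg_right (le_trans hge (hb2 A₁)) hR0
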